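/- arXiv:1111.0231 — 6 statements merged into one kernel-verified Lean document; each statement's English description precedes it below -/
import Mathlib

section
/- Let b, ν be real numbers with b ≥ 0 and b − ν < −1. Then there exists a constant C > 0, depending only on b and ν, such that for every τ > 1 the integral I♯(τ) = ∫_1^∞ t^b / ((t − τ²)² + 4τ²)^{ν/2} dt is finite and satisfies I♯(τ) ≤ C τ^{2b+1−ν}. -/
open MeasureTheory Set Real

/-! Split `(1, ∞)` at `2τ²`. On `(1, 2τ²]` use `t ^ b ≤ (2τ²) ^ b` and integrate the kernel
`((t - τ²)² + (2τ)²) ^ (-ν/2)` over all of `ℝ`: the substitution `t = τ² + 2τu` turns it into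
`(2τ) ^ (1 - ν) ∫ (1 + u²) ^ (-ν/2)`, finite because `ν > 1`. On `(2τ², ∞)` we have
`t - τ² ≥ t/2`, so the integrand is at most `2 ^ ν t ^ (b - ν)`, whose integral is a multiple of
`τ ^ (2(b - ν + 1)) ≤ τ ^ (2b + 1 - ν)`. -/

lemma integrable_one_add_sq_rpow_neg {ν : ℝ} (hν : 1 < ν) :
    Integrable fun u : ℝ => (1 + u ^ 2) ^ (-ν / 2) := by
  simpa [Real.norm_eq_abs, sq_abs] using
    integrable_rpow_neg_one_add_norm_sq (E := ℝ) (μ := volume) (r := ν) (by simpa using hν)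

lemma sq_add_sq_rpow_neg_eq (ν a : ℝ) {c : ℝ} (hc : 0 < c) (t : ℝ) :
    ((t - a) ^ 2 + c ^ 2) ^ (-ν / 2) = c ^ (-ν) * (1 + ((t - a) / c) ^ 2) ^ (-ν / 2) := by
  have hsplit : (t - a) ^ 2 + c ^ 2 = c ^ 2 * (1 + ((t - a) / c) ^ 2) := by
    field_simp; ring
  rw [hsplit, mul_rpow (by positivity) (by positivity), ← rpow_natCast_mul hc.le]
  push_cast
  ring_nf

lemma integrable_sq_add_sq_rpow_neg {ν : ℝ} (hν : 1 < ν) (a : ℝ) {c : ℝ} (hc : 0 < c) :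
    Integrable fun t : ℝ => ((t - a) ^ 2 + c ^ 2) ^ (-ν / 2) := by
  simp_rw [sq_add_sq_rpow_neg_eq ν a hc]
  exact (((integrable_one_add_sq_rpow_neg hν).comp_div hc.ne').comp_sub_right a).const_mul _

lemma integral_sq_add_sq_rpow_neg (ν a : ℝ) {c : ℝ} (hc : 0 < c) :
    ∫ t : ℝ, ((t - a) ^ 2 + c ^ 2) ^ (-ν / 2) =
      c ^ (1 - ν) * ∫ u : ℝ, (1 + u ^ 2) ^ (-ν / 2) := by
  simp_rw [sq_add_sq_rpow_neg_eq ν a hc]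
  rw [integral_const_mul, integral_sub_right_eq_self (fun x => (1 + (x / c) ^ 2) ^ (-ν / 2)) a,
    Measure.integral_comp_div (fun u => (1 + u ^ 2) ^ (-ν / 2)) c, abs_of_pos hc, smul_eq_mul,
    ← mul_assoc, ← rpow_add_one hc.ne', neg_add_eq_sub]

lemma integrableOn_Ioc_rpow_mul_and_setIntegral_le {b a T : ℝ} (hb : 0 ≤ b) (ha : 0 ≤ a)
    (hT : 0 ≤ T) {g : ℝ → ℝ} (hg : Integrable g) (hg0 : 0 ≤ g) :
    IntegrableOn (fun t => t ^ b * g t) (Ioc a T) ∧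
      ∫ t in Ioc a T, t ^ b * g t ≤ T ^ b * ∫ t, g t := by
  have hle : ∀ t ∈ Ioc a T, t ^ b * g t ≤ T ^ b * g t := fun t ht =>
    mul_le_mul_of_nonneg_right (rpow_le_rpow (ha.trans ht.1.le) ht.2 hb) (hg0 t)
  have hint : IntegrableOn (fun t => t ^ b * g t) (Ioc a T) := by
    refine (hg.const_mul (T ^ b)).integrableOn.mono'
      ((measurable_id.pow_const b).aestronglyMeasurable.mul hg.aestronglyMeasurable.restrict) ?_
    filter_upwards [ae_restrict_mem measurableSet_Ioc] with t ht
    rw [Real.norm_eq_abs, abs_of_nonneg (mul_nonneg (rpow_nonneg (ha.trans ht.1.le) b) (hg0 t))]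
    exact hle t ht
  refine ⟨hint, ?_⟩
  calc ∫ t in Ioc a T, t ^ b * g t ≤ ∫ t in Ioc a T, T ^ b * g t :=
        setIntegral_mono_on hint (hg.const_mul _).integrableOn measurableSet_Ioc hle
    _ ≤ ∫ t, T ^ b * g t := setIntegral_le_integral (hg.const_mul _)
        (Filter.Eventually.of_forall fun t => mul_nonneg (rpow_nonneg hT b) (hg0 t))
    _ = T ^ b * ∫ t, g t := integral_const_mul _ _

lemma rpow_mul_sq_add_sq_rpow_neg_le {b ν a : ℝ} (c : ℝ) (hν : 0 ≤ ν) (ha : 0 ≤ a) {t : ℝ}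
    (ht : 2 * a < t) :
    t ^ b * ((t - a) ^ 2 + c ^ 2) ^ (-ν / 2) ≤ 2 ^ ν * t ^ (b - ν) := by
  have ht0 : 0 < t := by linarith
  have hsq : (t / 2) ^ 2 ≤ (t - a) ^ 2 + c ^ 2 := by nlinarith
  calc t ^ b * ((t - a) ^ 2 + c ^ 2) ^ (-ν / 2) ≤ t ^ b * ((t / 2) ^ 2) ^ (-ν / 2) := by
        have hν2 : -ν / 2 ≤ 0 := by linarith
        exact mul_le_mul_of_nonneg_left
          (rpow_le_rpow_of_nonpos (pow_pos (half_pos ht0) 2) hsq hν2) (rpow_nonneg ht0.le b)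
    _ = 2 ^ ν * t ^ (b - ν) := by
        rw [← rpow_natCast_mul (by positivity), show ((2 : ℕ) : ℝ) * (-ν / 2) = -ν by ring,
          div_rpow ht0.le zero_le_two, rpow_neg ht0.le, rpow_neg zero_le_two, rpow_sub ht0]
        field_simp

lemma integrableOn_Ioi_rpow_mul_sq_add_sq_rpow_neg_and_setIntegral_le {b ν a : ℝ} (c : ℝ)
    (hν : 0 ≤ ν) (hbν : b - ν < -1) (ha : 0 < a) :
    IntegrableOn (fun t => t ^ b * ((t - a) ^ 2 + c ^ 2) ^ (-ν / 2)) (Ioi (2 * a)) ∧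
      ∫ t in Ioi (2 * a), t ^ b * ((t - a) ^ 2 + c ^ 2) ^ (-ν / 2) ≤
        2 ^ (b + 1) / (ν - b - 1) * a ^ (b - ν + 1) := by
  have hle : ∀ t ∈ Ioi (2 * a), t ^ b * ((t - a) ^ 2 + c ^ 2) ^ (-ν / 2) ≤ 2 ^ ν * t ^ (b - ν) :=
    fun t ht => rpow_mul_sq_add_sq_rpow_neg_le c hν ha.le ht
  have hmaj : IntegrableOn (fun t : ℝ => 2 ^ ν * t ^ (b - ν)) (Ioi (2 * a)) :=
    (integrableOn_Ioi_rpow_of_lt hbν (by positivity)).const_mul _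
  have hint : IntegrableOn (fun t => t ^ b * ((t - a) ^ 2 + c ^ 2) ^ (-ν / 2)) (Ioi (2 * a)) := by
    refine hmaj.mono' (by fun_prop) ?_
    filter_upwards [ae_restrict_mem measurableSet_Ioi] with t ht
    have ht0 : 0 < t := by have : 2 * a < t := ht; linarith
    rw [Real.norm_eq_abs, abs_of_nonneg (by positivity)]
    exact hle t ht
  refine ⟨hint, ?_⟩
  calc ∫ t in Ioi (2 * a), t ^ b * ((t - a) ^ 2 + c ^ 2) ^ (-ν / 2)
      ≤ ∫ t in Ioi (2 * a), 2 ^ ν * t ^ (b - ν) :=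
        setIntegral_mono_on hint hmaj measurableSet_Ioi hle
    _ = 2 ^ (b + 1) / (ν - b - 1) * a ^ (b - ν + 1) := by
        rw [integral_const_mul, integral_Ioi_rpow_of_lt hbν (by positivity),
          mul_rpow zero_le_two ha.le]
        have h2 : (2 : ℝ) ^ ν * 2 ^ (b - ν + 1) = 2 ^ (b + 1) := by
          rw [← rpow_add zero_lt_two]; ring_nf
        have hne : b - ν + 1 ≠ 0 := by linarith
        have hne' : ν - b - 1 ≠ 0 := by linarith
        field_simp
        rw [h2]
        ring

lemma two_mul_sq_rpow_mul_two_mul_rpow (b ν : ℝ) {τ : ℝ} (hτ : 0 < τ) :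
    (2 * τ ^ 2) ^ b * (2 * τ) ^ (1 - ν) = 2 ^ (1 + b - ν) * τ ^ (2 * b + 1 - ν) := by
  rw [mul_rpow zero_le_two (by positivity), mul_rpow zero_le_two hτ.le,
    ← rpow_natCast_mul hτ.le, show 1 + b - ν = b + (1 - ν) by ring,
    show 2 * b + 1 - ν = ((2 : ℕ) : ℝ) * b + (1 - ν) by push_cast; ring,
    rpow_add zero_lt_two, rpow_add hτ]
  ring

lemma sq_rpow_sub_add_one_le {b ν τ : ℝ} (hν : 1 ≤ ν) (hτ : 1 ≤ τ) :
    (τ ^ 2) ^ (b - ν + 1) ≤ τ ^ (2 * b + 1 - ν) := by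
  rw [← rpow_natCast_mul (by linarith)]
  exact rpow_le_rpow_of_exponent_le hτ (by push_cast; linarith)

/-- Case (a) of the integral estimate for
`I♯(τ) = ∫_1^∞ t^b / ((t − τ²)² + 4τ²)^{ν/2} dt`:
if `b ≥ 0` and `b − ν < −1`, then `I♯(τ) ≤ C τ^{2b+1−ν}` for all `τ > 1`. -/
theorem integral_sharp_bound_case_a (b ν : ℝ) (hb : 0 ≤ b) (hbν : b - ν < -1) :
    ∃ C : ℝ, 0 < C ∧ ∀ τ : ℝ, 1 < τ →
      IntegrableOn (fun t : ℝ => t ^ b / ((t - τ ^ 2) ^ 2 + 4 * τ ^ 2) ^ (ν / 2))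
        (Ioi 1) volume ∧
      (∫ t in Ioi (1 : ℝ), t ^ b / ((t - τ ^ 2) ^ 2 + 4 * τ ^ 2) ^ (ν / 2)) ≤
        C * τ ^ (2 * b + 1 - ν) := by
  have hν : 1 < ν := by linarith
  set K := ∫ u : ℝ, (1 + u ^ 2) ^ (-ν / 2)
  have hK : 0 ≤ K := integral_nonneg fun u => by positivity
  have htail_const : 0 < (2 : ℝ) ^ (b + 1) / (ν - b - 1) := div_pos (by positivity) (by linarith)
  refine ⟨2 ^ (1 + b - ν) * K + 2 ^ (b + 1) / (ν - b - 1),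
    add_pos_of_nonneg_of_pos (by positivity) htail_const, fun τ hτ => ?_⟩
  have hτ0 : 0 < τ := by linarith
  have hform : (fun t : ℝ => t ^ b / ((t - τ ^ 2) ^ 2 + 4 * τ ^ 2) ^ (ν / 2)) =
      fun t => t ^ b * ((t - τ ^ 2) ^ 2 + (2 * τ) ^ 2) ^ (-ν / 2) := by
    ext t
    rw [neg_div, rpow_neg (by positivity), div_eq_mul_inv, mul_pow]
    norm_num
  obtain ⟨hnear_int, hnear⟩ := integrableOn_Ioc_rpow_mul_and_setIntegral_le hb zero_le_one
    (by positivity : (0 : ℝ) ≤ 2 * τ ^ 2)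
    (integrable_sq_add_sq_rpow_neg hν (τ ^ 2) (by positivity : 0 < 2 * τ))
    (fun t => by positivity)
  obtain ⟨htail_int, htail⟩ :=
    integrableOn_Ioi_rpow_mul_sq_add_sq_rpow_neg_and_setIntegral_le (2 * τ) (by linarith) hbν
      (by positivity : 0 < τ ^ 2)
  rw [integral_sq_add_sq_rpow_neg ν (τ ^ 2) (by positivity : 0 < 2 * τ)] at hnear
  have hsplit : Ioi (1 : ℝ) = Ioc 1 (2 * τ ^ 2) ∪ Ioi (2 * τ ^ 2) :=
    (Ioc_union_Ioi_eq_Ioi (by nlinarith)).symm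
  rw [hform, hsplit, setIntegral_union (Ioc_disjoint_Ioi le_rfl) measurableSet_Ioi hnear_int
    htail_int]
  refine ⟨hnear_int.union htail_int, ?_⟩
  rw [← mul_assoc, two_mul_sq_rpow_mul_two_mul_rpow b ν hτ0] at hnear
  have htail_pow :=
    mul_le_mul_of_nonneg_left (sq_rpow_sub_add_one_le (b := b) hν.le hτ.le) htail_const.le
  linarith
end

section
/- Let b, ν be real numbers with −1 ≤ b < 0 and b − ν < −1. Then for every ε > 0 there exists a constant C_ε > 0, depending only on b, ν and ε, such that for every τ > 1 the integral I♯(τ) = ∫_1^∞ t^b / ((t − τ²)² + 4τ²)^{ν/2} dt is finite and satisfies I♯(τ) ≤ C_ε τ^{ε+b+1−ν}. -/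
/-! Write `T = τ²`. On `(1, ∞)` the integrand is dominated by a majorant with three pieces.
For `t ≤ T/2` the denominator is at least `(T/2)^ν`, and `t^b ≤ t^(b+ε/2)`: this is where `ε`
is spent, to absorb the logarithm that `∫ t^b` produces when `b = -1`. For `t ≥ 2T` the
denominator is at least `(t/2)^ν`, and `t^(b-ν)` is integrable at infinity. In between,
`t^b ≤ (T/2)^b`, and splitting the exponent as `ν = (ν - b - 1) + (b + 1)` bounds the
denominator below by `T^((ν-b-1)/2) |t - T|^(b+1)`, whose reciprocal is integrable across
`t = T` because `b + 1 < 1`. Each piece integrates to a constant times a power of `T` not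
exceeding `T^((ε+b+1-ν)/2)`. -/

open MeasureTheory Set
open scoped Interval

theorem integral_rpow_abs_sub_uIoc {a b s : ℝ} (hs : -1 < s) :
    ∫ x in Ι a b, |x - a| ^ s = |b - a| ^ (s + 1) / (s + 1) := by
  have hs' : s + 1 ≠ 0 := by linarith
  rcases le_or_gt a b with hab | hab
  · calc
      ∫ x in Ι a b, |x - a| ^ s = ∫ x in a..b, |x - a| ^ s := by
        rw [uIoc_of_le hab, ← intervalIntegral.integral_of_le hab]
      _ = ∫ x in 0..(b - a), x ^ s := by
        simp only [intervalIntegral.integral_comp_sub_right fun x => |x| ^ s, sub_self]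
        refine intervalIntegral.integral_congr fun x hx =>
          congr_arg₂ HPow.hPow (abs_of_nonneg ?_) rfl
        rw [uIcc_of_le (sub_nonneg.2 hab)] at hx
        exact hx.1
      _ = |b - a| ^ (s + 1) / (s + 1) := by
        rw [integral_rpow (Or.inl hs), Real.zero_rpow hs', abs_of_nonneg (sub_nonneg.2 hab),
          sub_zero]
  · calc
      ∫ x in Ι a b, |x - a| ^ s = ∫ x in b..a, |x - a| ^ s := by
        rw [uIoc_of_ge hab.le, ← intervalIntegral.integral_of_le hab.le]
      _ = ∫ x in b - a..0, (-x) ^ s := by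
        simp only [intervalIntegral.integral_comp_sub_right fun x => |x| ^ s, sub_self]
        refine intervalIntegral.integral_congr fun x hx =>
          congr_arg₂ HPow.hPow (abs_of_nonpos ?_) rfl
        rw [uIcc_of_le (sub_nonpos.2 hab.le)] at hx
        exact hx.2
      _ = |b - a| ^ (s + 1) / (s + 1) := by
        rw [intervalIntegral.integral_comp_neg fun x => x ^ s, integral_rpow (Or.inl hs), neg_zero,
          Real.zero_rpow hs', abs_of_neg (sub_neg.2 hab), neg_sub, sub_zero]

theorem integrableOn_rpow_abs_sub_uIoc {a b s : ℝ} (hs : -1 < s) :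
    IntegrableOn (fun x => |x - a| ^ s) (Ι a b) := by
  rcases eq_or_ne a b with rfl | hab
  · simp
  refine Integrable.of_integral_ne_zero ?_
  rw [integral_rpow_abs_sub_uIoc hs]
  have : 0 < |b - a| := abs_pos.2 (sub_ne_zero.2 hab.symm)
  have : 0 < s + 1 := by linarith
  positivity

theorem integrableOn_rpow_abs_sub_Ioc_and_integral_eq {c r s : ℝ} (hs : -1 < s) (hr : 0 ≤ r) :
    IntegrableOn (fun x => |x - c| ^ s) (Ioc (c - r) (c + r)) ∧
      ∫ x in Ioc (c - r) (c + r), |x - c| ^ s = 2 * r ^ (s + 1) / (s + 1) := by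
  have hsplit : Ioc (c - r) (c + r) = Ι c (c - r) ∪ Ι c (c + r) := by
    rw [uIoc_of_ge (by linarith), uIoc_of_le (by linarith),
      Ioc_union_Ioc_eq_Ioc (by linarith) (by linarith)]
  have hdisj : Disjoint (Ι c (c - r)) (Ι c (c + r)) := by
    rw [uIoc_of_ge (by linarith), uIoc_of_le (by linarith)]
    exact Ioc_disjoint_Ioc_of_le le_rfl
  have h₁ := integrableOn_rpow_abs_sub_uIoc (a := c) (b := c - r) hs
  have h₂ := integrableOn_rpow_abs_sub_uIoc (a := c) (b := c + r) hs
  refine ⟨hsplit ▸ h₁.union h₂, ?_⟩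
  rw [hsplit, setIntegral_union hdisj measurableSet_uIoc h₁ h₂, integral_rpow_abs_sub_uIoc hs,
    integral_rpow_abs_sub_uIoc hs, sub_sub_cancel_left, add_sub_cancel_left, abs_neg,
    abs_of_nonneg hr]
  ring

theorem rpow_le_rpow_half_of_sq_le {x y r : ℝ} (hx : 0 ≤ x) (h : x ^ 2 ≤ y) (hr : 0 ≤ r) :
    x ^ r ≤ y ^ (r / 2) := by
  calc x ^ r = (x ^ 2) ^ (r / 2) := by
        rw [← Real.rpow_natCast, ← Real.rpow_mul hx]; ring_nf
    _ ≤ y ^ (r / 2) := Real.rpow_le_rpow (by positivity) h (by linarith)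

/-- The integrand of `I♯(τ)`, with `T = τ²`. -/
noncomputable def sharpIntegrand (b ν T t : ℝ) : ℝ := t ^ b / ((t - T) ^ 2 + 4 * T) ^ (ν / 2)

section
variable {b ν T t : ℝ}

theorem sharpIntegrand_le_of_le_half (hν : 0 ≤ ν) (ht : 0 < t) (htT : t ≤ T / 2) :
    sharpIntegrand b ν T t ≤ 2 ^ ν * T ^ (-ν) * t ^ b := by
  have hT : 0 < T := by linarith
  have hden : (T / 2) ^ ν ≤ ((t - T) ^ 2 + 4 * T) ^ (ν / 2) :=
    rpow_le_rpow_half_of_sq_le (by positivity) (by nlinarith) hν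
  calc sharpIntegrand b ν T t ≤ t ^ b / (T / 2) ^ ν :=
        div_le_div_of_nonneg_left (by positivity) (by positivity) hden
    _ = 2 ^ ν * T ^ (-ν) * t ^ b := by
        rw [Real.div_rpow hT.le zero_le_two, Real.rpow_neg hT.le]
        field_simp

theorem sharpIntegrand_le_of_two_mul_le (hν : 0 ≤ ν) (hT : 0 < T) (ht : 2 * T ≤ t) :
    sharpIntegrand b ν T t ≤ 2 ^ ν * t ^ (b - ν) := by
  have ht0 : 0 < t := by linarith
  have hden : (t / 2) ^ ν ≤ ((t - T) ^ 2 + 4 * T) ^ (ν / 2) :=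
    rpow_le_rpow_half_of_sq_le (by positivity) (by nlinarith) hν
  calc sharpIntegrand b ν T t ≤ t ^ b / (t / 2) ^ ν :=
        div_le_div_of_nonneg_left (by positivity) (by positivity) hden
    _ = 2 ^ ν * t ^ (b - ν) := by
        rw [Real.div_rpow ht0.le zero_le_two, Real.rpow_sub ht0]
        field_simp

/-- Hölder splitting `ν = (ν - γ) + γ` of the denominator: one factor is at least `T`, the
other at least `|t - T|`. -/
theorem sharpIntegrand_le_of_half_le {γ : ℝ} (hγ : 0 ≤ γ) (hγν : γ ≤ ν) (hb : b ≤ 0)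
    (hT : 0 < T) (ht : T / 2 ≤ t) (htT : t ≠ T) :
    sharpIntegrand b ν T t ≤ (T / 2) ^ b * T ^ ((γ - ν) / 2) * |t - T| ^ (-γ) := by
  have hD : 0 < (t - T) ^ 2 + 4 * T := by positivity
  have habs : 0 < |t - T| := abs_pos.2 (sub_ne_zero.2 htT)
  have hden : T ^ ((ν - γ) / 2) * |t - T| ^ γ ≤ ((t - T) ^ 2 + 4 * T) ^ (ν / 2) := by
    calc T ^ ((ν - γ) / 2) * |t - T| ^ γ
        ≤ ((t - T) ^ 2 + 4 * T) ^ ((ν - γ) / 2) * ((t - T) ^ 2 + 4 * T) ^ (γ / 2) := by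
          gcongr
          · nlinarith
          · exact rpow_le_rpow_half_of_sq_le (abs_nonneg _) (by rw [sq_abs]; nlinarith) hγ
      _ = ((t - T) ^ 2 + 4 * T) ^ (ν / 2) := by rw [← Real.rpow_add hD]; ring_nf
  calc sharpIntegrand b ν T t ≤ (T / 2) ^ b / (T ^ ((ν - γ) / 2) * |t - T| ^ γ) :=
        div_le_div₀ (by positivity) (Real.rpow_le_rpow_of_nonpos (by positivity) ht hb)
          (by positivity) hden
    _ = (T / 2) ^ b * T ^ ((γ - ν) / 2) * |t - T| ^ (-γ) := by
        rw [Real.rpow_neg habs.le, show (γ - ν) / 2 = -((ν - γ) / 2) by ring,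
          Real.rpow_neg hT.le]
        field_simp

noncomputable def sharpMajorant (b ν ε T : ℝ) : ℝ → ℝ :=
  (Ioc 0 T).indicator (fun t => 2 ^ ν * T ^ (-ν) * t ^ (b + ε / 2)) +
    (Ioc 0 (2 * T)).indicator
      (fun t => (T / 2) ^ b * T ^ ((b + 1 - ν) / 2) * |t - T| ^ (-(b + 1))) +
    (Ioi T).indicator (fun t => 2 ^ ν * t ^ (b - ν))

theorem sharpMajorant_nonneg {ε : ℝ} (hT : 0 ≤ T) (t : ℝ) :
    0 ≤ sharpMajorant b ν ε T t :=
  add_nonneg (add_nonneg (indicator_apply_nonneg fun ht => by have := ht.1; positivity)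
    (indicator_apply_nonneg fun _ => by positivity))
    (indicator_apply_nonneg fun ht => by have : 0 < t := hT.trans_lt ht; positivity)

theorem sharpIntegrand_le_sharpMajorant {ε : ℝ} (hb1 : -1 ≤ b) (hb2 : b < 0)
    (hbν : b - ν < -1) (hε : 0 ≤ ε) (hT : 0 < T) (ht : 1 ≤ t) (htT : t ≠ T) :
    sharpIntegrand b ν T t ≤ sharpMajorant b ν ε T t := by
  have hν : 0 ≤ ν := by linarith
  have ht0 : 0 < t := by linarith
  simp only [sharpMajorant, Pi.add_apply]
  rcases le_or_gt t (T / 2) with hlow | hlow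
  · rw [indicator_of_mem (show t ∈ Ioc 0 T from ⟨ht0, by linarith⟩)]
    refine le_add_of_le_of_nonneg (le_add_of_le_of_nonneg ?_
      (indicator_apply_nonneg fun _ => by positivity))
      (indicator_apply_nonneg fun _ => by positivity)
    calc sharpIntegrand b ν T t ≤ 2 ^ ν * T ^ (-ν) * t ^ b :=
          sharpIntegrand_le_of_le_half hν ht0 hlow
      _ ≤ 2 ^ ν * T ^ (-ν) * t ^ (b + ε / 2) := by gcongr; linarith
  rcases le_or_gt t (2 * T) with hhigh | hhigh
  · rw [indicator_of_mem (show t ∈ Ioc 0 (2 * T) from ⟨ht0, hhigh⟩)]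
    refine le_add_of_le_of_nonneg (le_add_of_nonneg_of_le
      (indicator_apply_nonneg fun _ => by positivity) ?_)
      (indicator_apply_nonneg fun _ => by positivity)
    exact sharpIntegrand_le_of_half_le (γ := b + 1) (by linarith) (by linarith) hb2.le hT
      hlow.le htT
  · rw [indicator_of_mem (show t ∈ Ioi T from by simp only [mem_Ioi]; linarith)]
    refine le_add_of_nonneg_of_le (add_nonneg (indicator_apply_nonneg fun _ => by positivity)
      (indicator_apply_nonneg fun _ => by positivity)) ?_
    exact sharpIntegrand_le_of_two_mul_le hν hT hhigh.le

theorem integrable_sharpMajorant_and_integral_eq {ε : ℝ} (hb1 : -1 ≤ b) (hb2 : b < 0)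
    (hbν : b - ν < -1) (hε : 0 < ε) (hT : 0 < T) :
    Integrable (sharpMajorant b ν ε T) ∧ ∫ t, sharpMajorant b ν ε T t =
      2 ^ ν * T ^ (-ν) * (T ^ (b + ε / 2 + 1) / (b + ε / 2 + 1)) +
        (T / 2) ^ b * T ^ ((b + 1 - ν) / 2) * (2 * T ^ (-b) / (-b)) +
        2 ^ ν * (-T ^ (b - ν + 1) / (b - ν + 1)) := by
  have hβ : -1 < b + ε / 2 := by linarith
  have hA : IntegrableOn (fun t => t ^ (b + ε / 2)) (Ioc 0 T) :=
    (intervalIntegral.intervalIntegrable_rpow' hβ).1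
  have hIA : ∫ t in Ioc 0 T, t ^ (b + ε / 2) = T ^ (b + ε / 2 + 1) / (b + ε / 2 + 1) := by
    rw [← intervalIntegral.integral_of_le hT.le, integral_rpow (Or.inl hβ),
      Real.zero_rpow (by linarith), sub_zero]
  obtain ⟨hB, hIB⟩ :=
    integrableOn_rpow_abs_sub_Ioc_and_integral_eq (c := T) (s := -(b + 1)) (by linarith) hT.le
  rw [sub_self, ← two_mul] at hB hIB
  rw [show -(b + 1) + 1 = -b by ring] at hIB
  have hC : IntegrableOn (fun t => t ^ (b - ν)) (Ioi T) := integrableOn_Ioi_rpow_of_lt hbν hT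
  have hA' :=
    IntegrableOn.integrable_indicator (hA.const_mul (2 ^ ν * T ^ (-ν))) measurableSet_Ioc
  have hB' := IntegrableOn.integrable_indicator
    (hB.const_mul ((T / 2) ^ b * T ^ ((b + 1 - ν) / 2))) measurableSet_Ioc
  have hC' := IntegrableOn.integrable_indicator (hC.const_mul (2 ^ ν)) measurableSet_Ioi
  refine ⟨(hA'.add hB').add hC', ?_⟩
  rw [sharpMajorant, integral_add' (hA'.add hB') hC', integral_add' hA' hB',
    integral_indicator measurableSet_Ioc, integral_indicator measurableSet_Ioc,
    integral_indicator measurableSet_Ioi, integral_const_mul, integral_const_mul,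
    integral_const_mul, hIA, hIB, integral_Ioi_rpow_of_lt hbν hT]

theorem integral_sharpMajorant_le {ε : ℝ} (hb1 : -1 ≤ b) (hb2 : b < 0) (hbν : b - ν < -1)
    (hε : 0 < ε) (hT : 1 ≤ T) :
    ∫ t, sharpMajorant b ν ε T t ≤
      (2 ^ ν / (b + ε / 2 + 1) + 2 * 2 ^ (-b) / (-b) + 2 ^ ν / (ν - b - 1)) *
        T ^ ((ε + b + 1 - ν) / 2) := by
  have hT0 : 0 < T := by linarith
  rw [(integrable_sharpMajorant_and_integral_eq hb1 hb2 hbν hε hT0).2]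
  have hA : 2 ^ ν * T ^ (-ν) * (T ^ (b + ε / 2 + 1) / (b + ε / 2 + 1)) ≤
      2 ^ ν / (b + ε / 2 + 1) * T ^ ((ε + b + 1 - ν) / 2) := by
    calc _ = 2 ^ ν / (b + ε / 2 + 1) * T ^ (b + ε / 2 + 1 - ν) := by
          rw [Real.rpow_sub hT0, Real.rpow_neg hT0.le]; ring
      _ ≤ _ := by
          gcongr
          · exact div_nonneg (by positivity) (by linarith)
          · linarith
  have hB : (T / 2) ^ b * T ^ ((b + 1 - ν) / 2) * (2 * T ^ (-b) / (-b)) ≤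
      2 * 2 ^ (-b) / (-b) * T ^ ((ε + b + 1 - ν) / 2) := by
    calc _ = 2 * 2 ^ (-b) / (-b) * T ^ ((b + 1 - ν) / 2) := by
          rw [Real.div_rpow hT0.le zero_le_two, Real.rpow_neg hT0.le, Real.rpow_neg zero_le_two]
          field_simp
      _ ≤ _ := by
          gcongr
          · exact div_nonneg (by positivity) (by linarith)
          · linarith
  have hC : 2 ^ ν * (-T ^ (b - ν + 1) / (b - ν + 1)) ≤
      2 ^ ν / (ν - b - 1) * T ^ ((ε + b + 1 - ν) / 2) := by
    calc _ = 2 ^ ν / (ν - b - 1) * T ^ (b - ν + 1) := by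
          rw [← neg_div_neg_eq, neg_neg, neg_add', neg_sub]; ring
      _ ≤ _ := by
          gcongr
          · exact div_nonneg (by positivity) (by linarith)
          · linarith
  linarith

theorem integrableOn_sharpIntegrand_and_integral_le {ε : ℝ} (hb1 : -1 ≤ b) (hb2 : b < 0)
    (hbν : b - ν < -1) (hε : 0 < ε) (hT : 1 < T) :
    IntegrableOn (sharpIntegrand b ν T) (Ioi 1) ∧ ∫ t in Ioi 1, sharpIntegrand b ν T t ≤
      (2 ^ ν / (b + ε / 2 + 1) + 2 * 2 ^ (-b) / (-b) + 2 ^ ν / (ν - b - 1)) *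
        T ^ ((ε + b + 1 - ν) / 2) := by
  have hg := (integrable_sharpMajorant_and_integral_eq hb1 hb2 hbν hε (by linarith)).1
  have hle : ∀ᵐ t ∂volume.restrict (Ioi 1),
      sharpIntegrand b ν T t ≤ sharpMajorant b ν ε T t := by
    filter_upwards [ae_restrict_mem measurableSet_Ioi,
      ae_restrict_of_ae (Measure.ae_ne volume T)] with t ht htT
    exact sharpIntegrand_le_sharpMajorant hb1 hb2 hbν hε.le (by linarith) (le_of_lt ht) htT
  have hmeas : Measurable (sharpIntegrand b ν T) := by unfold sharpIntegrand; fun_prop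
  have hint : IntegrableOn (sharpIntegrand b ν T) (Ioi 1) := by
    refine hg.integrableOn.mono' hmeas.aestronglyMeasurable ?_
    filter_upwards [ae_restrict_mem measurableSet_Ioi, hle] with t ht htg
    have : 0 < t := by linarith [mem_Ioi.1 ht]
    rwa [Real.norm_of_nonneg (by unfold sharpIntegrand; positivity)]
  refine ⟨hint, ?_⟩
  calc ∫ t in Ioi 1, sharpIntegrand b ν T t ≤ ∫ t in Ioi 1, sharpMajorant b ν ε T t :=
        integral_mono_ae hint hg.integrableOn hle
    _ ≤ ∫ t, sharpMajorant b ν ε T t :=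
        setIntegral_le_integral hg (ae_of_all _ (sharpMajorant_nonneg (by linarith)))
    _ ≤ _ := integral_sharpMajorant_le hb1 hb2 hbν hε hT.le

end

/-- Case (b) of the integral estimate for
`I♯(τ) = ∫_1^∞ t^b / ((t − τ²)² + 4τ²)^{ν/2} dt`:
if `−1 ≤ b < 0` and `b − ν < −1`, then for every `ε > 0` one has
`I♯(τ) ≤ C_ε τ^{ε+b+1−ν}` for all `τ > 1`. -/
theorem integral_sharp_bound_case_b (b ν : ℝ) (hb1 : -1 ≤ b) (hb2 : b < 0)
    (hbν : b - ν < -1) :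
    ∀ ε : ℝ, 0 < ε → ∃ C : ℝ, 0 < C ∧ ∀ τ : ℝ, 1 < τ →
      IntegrableOn (fun t : ℝ => t ^ b / ((t - τ ^ 2) ^ 2 + 4 * τ ^ 2) ^ (ν / 2))
        (Ioi 1) volume ∧
      (∫ t in Ioi (1 : ℝ), t ^ b / ((t - τ ^ 2) ^ 2 + 4 * τ ^ 2) ^ (ν / 2)) ≤
        C * τ ^ (ε + b + 1 - ν) := by
  intro ε hε
  have hA : 0 < 2 ^ ν / (b + ε / 2 + 1) := div_pos (by positivity) (by linarith)
  have hB : 0 < 2 * 2 ^ (-b) / (-b) := div_pos (by positivity) (by linarith)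
  have hC : 0 < 2 ^ ν / (ν - b - 1) := div_pos (by positivity) (by linarith)
  refine ⟨2 ^ ν / (b + ε / 2 + 1) + 2 * 2 ^ (-b) / (-b) + 2 ^ ν / (ν - b - 1), by linarith,
    fun τ hτ => ?_⟩
  have hτ_sq : (τ ^ 2) ^ ((ε + b + 1 - ν) / 2) = τ ^ (ε + b + 1 - ν) := by
    rw [← Real.rpow_natCast, ← Real.rpow_mul (by linarith)]; ring_nf
  rw [← hτ_sq]
  exact integrableOn_sharpIntegrand_and_integral_le hb1 hb2 hbν hε (by nlinarith : 1 < τ ^ 2)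
end

section
/- Let b, ν be real numbers with b < 0 and ν > 1. Then there exists a constant C > 0, depending only on b and ν, such that for every τ > 1 the integral I♯(τ) = ∫_1^∞ t^b / ((t − τ²)² + 4τ²)^{ν/2} dt is finite and satisfies I♯(τ) ≤ C τ^{1−ν}. -/
/-!
Substituting `t = τ s + τ²` turns `((t - τ²)² + 4τ²)^{-ν/2}` into `τ^{-ν} (s² + 4)^{-ν/2}`, whose
integral over the whole line is `τ^{1-ν} ∫ (s² + 4)^{-ν/2} ds`, finite for `ν > 1`. Since `b ≤ 0`,
the weight `t^b` is at most `1` on `[1, ∞)`, so `I♯(τ)` is bounded by that integral.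
-/

open MeasureTheory Set

lemma sub_sq_add_four_mul_sq_rpow (ν a t : ℝ) {τ : ℝ} (hτ : 0 < τ) :
    ((t - a) ^ 2 + 4 * τ ^ 2) ^ (ν / 2) = τ ^ ν * (((t - a) / τ) ^ 2 + 4) ^ (ν / 2) := by
  have hsplit : (t - a) ^ 2 + 4 * τ ^ 2 = τ ^ 2 * (((t - a) / τ) ^ 2 + 4) := by
    field_simp
  rw [hsplit, Real.mul_rpow (by positivity) (by positivity), ← Real.rpow_natCast,
    ← Real.rpow_mul hτ.le]
  ring_nf

lemma integrable_inv_sq_add_four_rpow {ν : ℝ} (hν : 1 < ν) :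
    Integrable fun s : ℝ => ((s ^ 2 + 4) ^ (ν / 2))⁻¹ := by
  have hbracket : Integrable fun s : ℝ => ((1 : ℝ) + ‖s‖ ^ 2) ^ (-ν / 2) :=
    integrable_rpow_neg_one_add_norm_sq (by simpa using hν)
  refine hbracket.mono' ?_ (.of_forall fun s => ?_)
  · exact Measurable.aestronglyMeasurable (by fun_prop (disch := intro s; positivity))
  · rw [norm_inv, Real.norm_of_nonneg (by positivity), Real.norm_eq_abs, sq_abs, neg_div,
      Real.rpow_neg (by positivity)]
    exact inv_anti₀ (by positivity) (Real.rpow_le_rpow (by positivity) (by linarith) (by linarith))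

lemma integrable_inv_sub_sq_add_four_mul_sq_rpow {ν : ℝ} (hν : 1 < ν) (a : ℝ) {τ : ℝ}
    (hτ : 0 < τ) : Integrable fun t : ℝ => (((t - a) ^ 2 + 4 * τ ^ 2) ^ (ν / 2))⁻¹ := by
  simp_rw [sub_sq_add_four_mul_sq_rpow ν a _ hτ, mul_inv]
  exact (((integrable_inv_sq_add_four_rpow hν).comp_div hτ.ne').comp_sub_right a).const_mul _

lemma integral_inv_sub_sq_add_four_mul_sq_rpow (ν a : ℝ) {τ : ℝ} (hτ : 0 < τ) :
    ∫ t : ℝ, (((t - a) ^ 2 + 4 * τ ^ 2) ^ (ν / 2))⁻¹ =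
      τ ^ (1 - ν) * ∫ s : ℝ, ((s ^ 2 + 4) ^ (ν / 2))⁻¹ := by
  simp_rw [sub_sq_add_four_mul_sq_rpow ν a _ hτ, mul_inv]
  rw [integral_const_mul, integral_sub_right_eq_self (fun t => (((t / τ) ^ 2 + 4) ^ (ν / 2))⁻¹) a,
    Measure.integral_comp_div (fun s => ((s ^ 2 + 4) ^ (ν / 2))⁻¹) τ, smul_eq_mul, abs_of_pos hτ,
    Real.rpow_sub hτ, Real.rpow_one]
  ring

/-- Intermediate integral estimate for
`I♯(τ) = ∫_1^∞ t^b / ((t − τ²)² + 4τ²)^{ν/2} dt`: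
if `b < 0` and `ν > 1`, then `I♯(τ) ≤ C τ^{1−ν}` for all `τ > 1`. -/
theorem integral_sharp_bound_intermediate (b ν : ℝ) (hb : b < 0) (hν : 1 < ν) :
    ∃ C : ℝ, 0 < C ∧ ∀ τ : ℝ, 1 < τ →
      IntegrableOn (fun t : ℝ => t ^ b / ((t - τ ^ 2) ^ 2 + 4 * τ ^ 2) ^ (ν / 2))
        (Ioi 1) volume ∧
      (∫ t in Ioi (1 : ℝ), t ^ b / ((t - τ ^ 2) ^ 2 + 4 * τ ^ 2) ^ (ν / 2)) ≤
        C * τ ^ (1 - ν) := by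
  set K := ∫ s : ℝ, ((s ^ 2 + 4) ^ (ν / 2))⁻¹
  have hK : 0 ≤ K := integral_nonneg fun s => by positivity
  refine ⟨K + 1, by linarith, fun τ hτ => ?_⟩
  have hτ0 : 0 < τ := by linarith
  set g := fun t : ℝ => (((t - τ ^ 2) ^ 2 + 4 * τ ^ 2) ^ (ν / 2))⁻¹
  have hg : Integrable g := integrable_inv_sub_sq_add_four_mul_sq_rpow hν _ hτ0
  have hfg : ∀ t ∈ Ioi (1 : ℝ), t ^ b / ((t - τ ^ 2) ^ 2 + 4 * τ ^ 2) ^ (ν / 2) ≤ g t :=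
    fun t ht => by
      rw [div_eq_mul_inv]
      exact mul_le_of_le_one_left (by positivity)
        (Real.rpow_le_one_of_one_le_of_nonpos (le_of_lt ht) hb.le)
  have hf : IntegrableOn (fun t : ℝ => t ^ b / ((t - τ ^ 2) ^ 2 + 4 * τ ^ 2) ^ (ν / 2))
      (Ioi 1) := by
    refine hg.integrableOn.mono'
      (Measurable.aestronglyMeasurable (by fun_prop (disch := intro t; positivity))) ?_
    filter_upwards [ae_restrict_mem measurableSet_Ioi] with t (ht : 1 < t)
    have ht0 : 0 < t := by linarith
    rw [Real.norm_of_nonneg (by positivity)]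
    exact hfg t ht
  refine ⟨hf, ?_⟩
  calc _ ≤ ∫ t in Ioi (1 : ℝ), g t := setIntegral_mono_on hf hg.integrableOn measurableSet_Ioi hfg
    _ ≤ ∫ t, g t := setIntegral_le_integral hg (.of_forall fun t => by positivity)
    _ = τ ^ (1 - ν) * K := integral_inv_sub_sq_add_four_mul_sq_rpow ν _ hτ0
    _ ≤ (K + 1) * τ ^ (1 - ν) := by rw [mul_comm]; gcongr; linarith
end

section
/- Let n ≥ 1 be an integer, c̃ > 0, A > 0, ν ≥ 0, and let μ be a real number with μ < −1. Let (λ_j)_{j≥1} be a sequence of nonnegative real numbers satisfying |√(λ_j) − c̃ j^{1/n}| ≤ A for all j ≥ 1. Then there exists a constant C > 0, depending only on n, μ, ν, c̃, A, such that for every τ > 1, with λ = (τ + i)², Σ_{j≥1} j^μ / |λ − λ_j|^ν ≤ C τ^{−ν}. -/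
/-!
Since every `λ_j` is real, `|λ - λ_j| ≥ |Im λ| = 2τ`, so each term of the series is at most
`j^μ τ^{-ν}`, and `Σ j^μ` converges because `μ < -1`.
-/

open Complex

lemma two_mul_le_norm_ofReal_add_I_sq_sub_ofReal {τ : ℝ} (hτ : 0 ≤ τ) (x : ℝ) :
    2 * τ ≤ ‖((τ : ℂ) + I) ^ 2 - (x : ℂ)‖ := by
  have him : (((τ : ℂ) + I) ^ 2 - (x : ℂ)).im = 2 * τ := by
    simp only [sq, sub_im, mul_im, add_re, add_im, ofReal_re, ofReal_im, I_re, I_im]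
    ring
  have := abs_im_le_norm (((τ : ℂ) + I) ^ 2 - (x : ℂ))
  rwa [him, abs_of_nonneg (by linarith)] at this

lemma div_rpow_le_mul_rpow_neg {a t d ν : ℝ} (ha : 0 ≤ a) (ht : 0 < t) (htd : t ≤ d)
    (hν : 0 ≤ ν) : a / d ^ ν ≤ a * t ^ (-ν) := by
  rw [Real.rpow_neg ht.le, ← div_eq_mul_inv]
  exact div_le_div_of_nonneg_left ha (Real.rpow_pos_of_pos ht ν) (Real.rpow_le_rpow ht.le htd hν)

lemma summable_nat_add_one_rpow {μ : ℝ} (hμ : μ < -1) :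
    Summable (fun j : ℕ => ((j : ℝ) + 1) ^ μ) := by
  have := (summable_nat_add_iff 1).2 (Real.summable_nat_rpow.2 hμ)
  exact_mod_cast this

lemma summable_and_tsum_le_of_le_mul {ι : Type*} {f g : ι → ℝ} {c : ℝ} (hf : Summable f)
    (hg : ∀ j, 0 ≤ g j) (hgf : ∀ j, g j ≤ f j * c) :
    Summable g ∧ ∑' j, g j ≤ (∑' j, f j) * c := by
  have hfc : Summable (fun j => f j * c) := hf.mul_right c
  have hgs : Summable g := hfc.of_nonneg_of_le hg hgf
  exact ⟨hgs, (hgs.tsum_le_tsum hgf hfc).trans_eq tsum_mul_right⟩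

theorem series_estimate_case_c_general (ν μ : ℝ)
    (hν : 0 ≤ ν) (hμ : μ < -1)
    (lam : ℕ → ℝ) :
    ∃ C : ℝ, 0 < C ∧ ∀ τ : ℝ, 1 < τ →
      Summable (fun j : ℕ =>
        ((j : ℝ) + 1) ^ μ / ‖((τ : ℂ) + Complex.I) ^ 2 - ((lam j : ℝ) : ℂ)‖ ^ ν) ∧
      (∑' j : ℕ,
        ((j : ℝ) + 1) ^ μ / ‖((τ : ℂ) + Complex.I) ^ 2 - ((lam j : ℝ) : ℂ)‖ ^ ν) ≤
        C * τ ^ (-ν) := by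
  have hS := summable_nat_add_one_rpow hμ
  have hpos : ∀ j : ℕ, 0 < ((j : ℝ) + 1) ^ μ := fun j => Real.rpow_pos_of_pos (by positivity) μ
  refine ⟨_, hS.tsum_pos (fun j => (hpos j).le) 0 (hpos 0), fun τ hτ => ?_⟩
  refine summable_and_tsum_le_of_le_mul hS (fun j => div_nonneg (hpos j).le (by positivity))
    fun j => div_rpow_le_mul_rpow_neg (hpos j).le (by linarith) ?_ hν
  linarith [two_mul_le_norm_ofReal_add_I_sq_sub_ofReal (by linarith : 0 ≤ τ) (lam j)]

/-- Case (c) of the main series estimate: if the sequence `(λ_j)_{j≥1}` of nonnegative reals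
satisfies the Weyl gap bound `|√(λ_j) − c̃ j^{1/n}| ≤ A`, and `μ < −1`, then for `τ > 1`
and `λ = (τ + i)²` one has `Σ_{j≥1} j^μ / |λ − λ_j|^ν ≤ C τ^{−ν}`.
Here `lam j` stands for `λ_{j+1}`, so that the sequence is indexed from `1`. -/
theorem series_estimate_case_c (n : ℕ) (hn : 1 ≤ n) (ctil A ν μ : ℝ)
    (hctil : 0 < ctil) (hA : 0 < A) (hν : 0 ≤ ν) (hμ : μ < -1)
    (lam : ℕ → ℝ) (hlam0 : ∀ j : ℕ, 0 ≤ lam j)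
    (hweyl : ∀ j : ℕ, |Real.sqrt (lam j) - ctil * ((j : ℝ) + 1) ^ (1 / (n : ℝ))| ≤ A) :
    ∃ C : ℝ, 0 < C ∧ ∀ τ : ℝ, 1 < τ →
      Summable (fun j : ℕ =>
        ((j : ℝ) + 1) ^ μ / ‖((τ : ℂ) + Complex.I) ^ 2 - ((lam j : ℝ) : ℂ)‖ ^ ν) ∧
      (∑' j : ℕ,
        ((j : ℝ) + 1) ^ μ / ‖((τ : ℂ) + Complex.I) ^ 2 - ((lam j : ℝ) : ℂ)‖ ^ ν) ≤
        C * τ ^ (-ν) :=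
  series_estimate_case_c_general ν μ hν hμ lam
end

section
/- Let n ≥ 1 be an integer, c > 0, ν > 0, and let μ be a real number with −1 < μ < 2ν/n − 1. Let (λ_j)_{j≥1} be a sequence of real numbers with λ_j ≥ c j^{2/n} for all j ≥ 1. Then there exists a constant C > 0, depending only on n, μ, ν, c, such that for every λ ∈ ℂ with Re λ ≤ −1, the series Σ_{j≥1} j^μ / |λ − λ_j|^ν converges absolutely and satisfies Σ_{j≥1} j^μ / |λ − λ_j|^ν ≤ C |Re λ|^{(μ+1)n/2 − ν}. In particular, since (μ+1)n/2 − ν < 0, the sum is bounded by C uniformly over all such λ. -/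
/-!
Since `Re λ ≤ -1` and `λ_j ≥ 0`, one has `|λ - λ_j| ≥ t + c j^{2/n}` with `t = |Re λ| ≥ 1`, so it
suffices to bound the real series `Σ_j j^μ / (t + c j^p)^ν`, `p = 2/n`. Split it at
`K = ⌈t^{1/p}⌉`, where `j^p` reaches `t`. For `j < K` the terms are at most `j^μ t^{-ν}`, and
`Σ_{j<K} j^μ ≲ K^{μ+1} ≲ t^{(μ+1)/p}` because `μ > -1`. For `j ≥ K` they are at most
`c^{-ν} j^{μ-pν}`, and since `μ - pν < -1` the integral test bounds that tail by
`K^{μ-pν+1} ≲ t^{(μ+1)/p-ν}`. Both pieces have the order `t^{(μ+1)/p-ν}`, which is at most `1`.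
-/

open Finset

theorem sum_range_add_one_rpow_le {μ : ℝ} (hμ : -1 < μ) (K : ℕ) :
    ∑ k ∈ range K, ((k : ℝ) + 1) ^ μ ≤ (1 + (μ + 1)⁻¹) * (K : ℝ) ^ (μ + 1) := by
  have hμ' : 0 < μ + 1 := by linarith
  have hK : 0 ≤ (K : ℝ) ^ (μ + 1) := by positivity
  rcases le_or_gt 0 μ with hμ0 | hμ0
  · calc ∑ k ∈ range K, ((k : ℝ) + 1) ^ μ ≤ ∑ _k ∈ range K, (K : ℝ) ^ μ := by
          gcongr with k hk
          exact_mod_cast mem_range.1 hk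
      _ = (K : ℝ) ^ (μ + 1) := by
          rw [sum_const, card_range, nsmul_eq_mul, Real.rpow_add_one' K.cast_nonneg hμ'.ne',
            mul_comm]
      _ ≤ (1 + (μ + 1)⁻¹) * (K : ℝ) ^ (μ + 1) := by
          nlinarith [inv_pos.2 hμ']
  · obtain _ | a := K
    · simp [Real.zero_rpow hμ'.ne']
    -- the first term is split off because `x ↦ x ^ μ` is not antitone at `x = 0`
    have hanti : AntitoneOn (fun x : ℝ => x ^ μ) (Set.Icc 1 (1 + a)) := fun x hx y _ hxy =>
      Real.rpow_le_rpow_of_nonpos (one_pos.trans_le hx.1) hxy hμ0.le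
    have hint := hanti.sum_le_integral
    rw [integral_rpow (Or.inl hμ), Real.one_rpow] at hint
    rw [sum_range_succ']
    push_cast at hint ⊢
    rw [add_comm (1 : ℝ) a] at hint
    set X := ((a : ℝ) + 1) ^ (μ + 1)
    have hX : 1 ≤ X := Real.one_le_rpow (by linarith [(a.cast_nonneg : (0 : ℝ) ≤ a)]) hμ'.le
    have htail : ∑ k ∈ range a, ((k : ℝ) + 1 + 1) ^ μ ≤ (X - 1) / (μ + 1) := by
      convert hint using 3; ring
    have hdiv : (X - 1) / (μ + 1) ≤ (μ + 1)⁻¹ * X := by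
      rw [div_eq_inv_mul]; gcongr; linarith
    calc ∑ k ∈ range a, ((k : ℝ) + 1 + 1) ^ μ + (0 + 1) ^ μ ≤ (μ + 1)⁻¹ * X + X := by
          rw [zero_add, Real.one_rpow]; linarith
      _ = (1 + (μ + 1)⁻¹) * X := by ring

theorem tsum_rpow_nat_add_le {a : ℝ} (ha : a < -1) {K : ℕ} (hK : 0 < K) :
    ∑' i : ℕ, ((i : ℝ) + K + 1) ^ a ≤ -(K : ℝ) ^ (a + 1) / (a + 1) := by
  have hK' : (0 : ℝ) < K := by exact_mod_cast hK
  have hanti : AntitoneOn (fun x : ℝ => x ^ a) (Set.Ici K) := fun x hx y _ hxy =>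
    Real.rpow_le_rpow_of_nonpos (hK'.trans_le hx) hxy (by linarith)
  have := hanti.tsum_comp_add_le_integral K (integrableOn_Ioi_rpow_of_lt ha hK')
    fun x hx => Real.rpow_nonneg (hK'.trans hx).le a
  rw [integral_Ioi_rpow_of_lt ha hK'] at this
  exact_mod_cast this

section RealSeries

variable {p ν μ c t x : ℝ}

theorem rpow_div_add_rpow_le_mul_rpow_neg (hν : 0 ≤ ν) (hc : 0 ≤ c) (ht : 0 < t) (hx : 0 < x) :
    x ^ μ / (t + c * x ^ p) ^ ν ≤ x ^ μ * t ^ (-ν) := by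
  rw [Real.rpow_neg ht.le, ← div_eq_mul_inv]
  gcongr
  exact le_add_of_nonneg_right (by positivity)

theorem rpow_div_add_rpow_le_rpow_sub (hν : 0 ≤ ν) (hc : 0 < c) (ht : 0 ≤ t) (hx : 0 < x) :
    x ^ μ / (t + c * x ^ p) ^ ν ≤ c ^ (-ν) * x ^ (μ - p * ν) := by
  calc x ^ μ / (t + c * x ^ p) ^ ν ≤ x ^ μ / (c * x ^ p) ^ ν := by
        gcongr
        exact le_add_of_nonneg_left ht
    _ = c ^ (-ν) * x ^ (μ - p * ν) := by
        rw [Real.mul_rpow hc.le (by positivity), ← Real.rpow_mul hx.le, Real.rpow_sub hx,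
          Real.rpow_neg hc.le]
        ring

theorem summable_rpow_div_add_rpow (hν : 0 ≤ ν) (hμν : μ + 1 < p * ν) (hc : 0 < c)
    (ht : 0 ≤ t) :
    Summable fun k : ℕ => ((k : ℝ) + 1) ^ μ / (t + c * ((k : ℝ) + 1) ^ p) ^ ν := by
  have hpow : Summable fun k : ℕ => ((k : ℝ) + 1) ^ (μ - p * ν) := by
    simpa using (summable_nat_add_iff 1).2 (Real.summable_nat_rpow.2 (by linarith))
  refine .of_nonneg_of_le (fun k => by positivity) (fun k => ?_) (hpow.mul_left (c ^ (-ν)))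
  exact rpow_div_add_rpow_le_rpow_sub hν hc ht k.cast_add_one_pos

theorem sum_range_rpow_div_add_rpow_le (hν : 0 ≤ ν) (hμ : -1 < μ) (hc : 0 ≤ c) (ht : 0 < t)
    {K : ℕ} (hK : (K : ℝ) ≤ 2 * t ^ p⁻¹) :
    ∑ k ∈ range K, ((k : ℝ) + 1) ^ μ / (t + c * ((k : ℝ) + 1) ^ p) ^ ν ≤
      (1 + (μ + 1)⁻¹) * 2 ^ (μ + 1) * t ^ ((μ + 1) / p - ν) := by
  have hA : 0 ≤ 1 + (μ + 1)⁻¹ := by have := inv_pos.2 (by linarith : 0 < μ + 1); linarith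
  calc ∑ k ∈ range K, ((k : ℝ) + 1) ^ μ / (t + c * ((k : ℝ) + 1) ^ p) ^ ν
      ≤ ∑ k ∈ range K, ((k : ℝ) + 1) ^ μ * t ^ (-ν) :=
        sum_le_sum fun k _ => rpow_div_add_rpow_le_mul_rpow_neg hν hc ht k.cast_add_one_pos
    _ = (∑ k ∈ range K, ((k : ℝ) + 1) ^ μ) * t ^ (-ν) := by rw [sum_mul]
    _ ≤ (1 + (μ + 1)⁻¹) * (2 * t ^ p⁻¹) ^ (μ + 1) * t ^ (-ν) := by
        grw [sum_range_add_one_rpow_le hμ K, hK]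
        linarith
    _ = (1 + (μ + 1)⁻¹) * 2 ^ (μ + 1) * t ^ ((μ + 1) / p - ν) := by
        rw [Real.mul_rpow zero_le_two (by positivity), ← Real.rpow_mul ht.le, ← mul_assoc,
          mul_assoc _ (t ^ _), ← Real.rpow_add ht]
        ring_nf

theorem tsum_rpow_div_add_rpow_nat_add_le (hp : 0 < p) (hν : 0 ≤ ν) (hμν : μ + 1 < p * ν)
    (hc : 0 < c) (ht : 0 < t) {K : ℕ} (hK : t ^ p⁻¹ ≤ K) :
    ∑' i : ℕ, ((↑(i + K) : ℝ) + 1) ^ μ / (t + c * ((↑(i + K) : ℝ) + 1) ^ p) ^ ν ≤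
      c ^ (-ν) / (p * ν - μ - 1) * t ^ ((μ + 1) / p - ν) := by
  have ha : μ - p * ν < -1 := by linarith
  have hK0 : 0 < K := by exact_mod_cast (by positivity : 0 < t ^ p⁻¹).trans_le hK
  have hpow : Summable fun i : ℕ => ((i : ℝ) + K + 1) ^ (μ - p * ν) := by
    simpa [add_assoc] using (summable_nat_add_iff (K + 1)).2 (Real.summable_nat_rpow.2 ha)
  have hKt : (K : ℝ) ^ (μ - p * ν + 1) ≤ t ^ ((μ + 1) / p - ν) := by
    calc (K : ℝ) ^ (μ - p * ν + 1) ≤ (t ^ p⁻¹) ^ (μ - p * ν + 1) :=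
          Real.rpow_le_rpow_of_nonpos (by positivity) hK (by linarith)
      _ = t ^ ((μ + 1) / p - ν) := by
          rw [← Real.rpow_mul ht.le]
          congr 1
          field_simp
          ring
  calc ∑' i : ℕ, ((↑(i + K) : ℝ) + 1) ^ μ / (t + c * ((↑(i + K) : ℝ) + 1) ^ p) ^ ν
      ≤ ∑' i : ℕ, c ^ (-ν) * ((i : ℝ) + K + 1) ^ (μ - p * ν) := by
        refine (summable_nat_add_iff K).2 (summable_rpow_div_add_rpow hν hμν hc ht.le)
          |>.tsum_le_tsum (fun i => ?_) (hpow.mul_left _)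
        simpa only [Nat.cast_add, add_assoc] using
          rpow_div_add_rpow_le_rpow_sub (μ := μ) (p := p) hν hc ht.le (i + K).cast_add_one_pos
    _ = c ^ (-ν) * ∑' i : ℕ, ((i : ℝ) + K + 1) ^ (μ - p * ν) := tsum_mul_left
    _ ≤ c ^ (-ν) * (-(K : ℝ) ^ (μ - p * ν + 1) / (μ - p * ν + 1)) := by
        grw [tsum_rpow_nat_add_le ha hK0]
    _ ≤ c ^ (-ν) / (p * ν - μ - 1) * t ^ ((μ + 1) / p - ν) := by
        rw [← neg_div_neg_eq, neg_neg, show -(μ - p * ν + 1) = p * ν - μ - 1 by ring]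
        grw [hKt]
        · exact le_of_eq (by ring)
        · linarith

theorem tsum_rpow_div_add_rpow_le (hp : 0 < p) (hν : 0 ≤ ν) (hμ : -1 < μ)
    (hμν : μ + 1 < p * ν) (hc : 0 < c) (ht : 1 ≤ t) :
    ∑' k : ℕ, ((k : ℝ) + 1) ^ μ / (t + c * ((k : ℝ) + 1) ^ p) ^ ν ≤
      ((1 + (μ + 1)⁻¹) * 2 ^ (μ + 1) + c ^ (-ν) / (p * ν - μ - 1)) *
        t ^ ((μ + 1) / p - ν) := by
  have ht0 : 0 < t := one_pos.trans_le ht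
  have hKup : (⌈t ^ p⁻¹⌉₊ : ℝ) ≤ 2 * t ^ p⁻¹ := by
    have := Nat.ceil_lt_add_one (Real.rpow_nonneg ht0.le p⁻¹)
    linarith [Real.one_le_rpow ht (inv_nonneg.2 hp.le)]
  rw [← (summable_rpow_div_add_rpow hν hμν hc ht0.le).sum_add_tsum_nat_add ⌈t ^ p⁻¹⌉₊, add_mul]
  exact add_le_add (sum_range_rpow_div_add_rpow_le hν hμ hc.le ht0 hKup)
    (tsum_rpow_div_add_rpow_nat_add_le hp hν hμν hc ht0 (Nat.le_ceil _))

end RealSeries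

theorem Complex.sub_re_le_norm_sub_ofReal (l : ℂ) (x : ℝ) : x - l.re ≤ ‖l - x‖ :=
  calc x - l.re ≤ |l.re - x| := by rw [abs_sub_comm]; exact le_abs_self _
    _ = |(l - x).re| := by simp
    _ ≤ ‖l - x‖ := Complex.abs_re_le_norm _

/-- The second series lemma: if `λ_j ≥ c j^{2/n}` and `−1 < μ < 2ν/n − 1`, `ν > 0`, then
for every `λ ∈ ℂ` with `Re λ ≤ −1` the series `Σ_{j≥1} j^μ / |λ − λ_j|^ν` converges
absolutely and is bounded by `C |Re λ|^{(μ+1)n/2 − ν}`; in particular (since the exponent is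
negative) it is bounded by `C` uniformly.  Here `lam j` stands for `λ_{j+1}`, so that the
sequence is indexed from `1`. -/
theorem series_estimate_left_halfplane (n : ℕ) (hn : 1 ≤ n) (c ν μ : ℝ)
    (hc : 0 < c) (hν : 0 < ν) (hμ1 : -1 < μ) (hμ2 : μ < 2 * ν / (n : ℝ) - 1)
    (lam : ℕ → ℝ) (hlam : ∀ j : ℕ, c * ((j : ℝ) + 1) ^ (2 / (n : ℝ)) ≤ lam j) :
    ∃ C : ℝ, 0 < C ∧ ∀ l : ℂ, l.re ≤ -1 →
      Summable (fun j : ℕ =>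
        ((j : ℝ) + 1) ^ μ / ‖l - ((lam j : ℝ) : ℂ)‖ ^ ν) ∧
      (∑' j : ℕ, ((j : ℝ) + 1) ^ μ / ‖l - ((lam j : ℝ) : ℂ)‖ ^ ν) ≤
        C * |l.re| ^ ((μ + 1) * (n : ℝ) / 2 - ν) ∧
      (∑' j : ℕ, ((j : ℝ) + 1) ^ μ / ‖l - ((lam j : ℝ) : ℂ)‖ ^ ν) ≤ C := by
  have hn0 : (0 : ℝ) < n := by exact_mod_cast hn
  have hμ' : 0 < μ + 1 := by linarith
  have hμν : μ + 1 < 2 / (n : ℝ) * ν := by rw [div_mul_eq_mul_div]; linarith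
  have hexp : (μ + 1) / (2 / (n : ℝ)) - ν = (μ + 1) * n / 2 - ν := by rw [div_div_eq_mul_div]
  have hexp_nonpos : (μ + 1) * n / 2 - ν ≤ 0 := by
    rw [lt_sub_iff_add_lt, lt_div_iff₀ hn0] at hμ2
    linarith
  set C := (1 + (μ + 1)⁻¹) * 2 ^ (μ + 1) + c ^ (-ν) / (2 / (n : ℝ) * ν - μ - 1)
  have hC : 0 < C := add_pos (mul_pos (add_pos one_pos (inv_pos.2 hμ')) (by positivity))
    (div_pos (by positivity) (by linarith))
  refine ⟨C, hC, fun l hl => ?_⟩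
  have hre : |l.re| = -l.re := abs_of_nonpos (by linarith)
  have ht : 1 ≤ |l.re| := by linarith
  have hterm (j : ℕ) : ((j : ℝ) + 1) ^ μ / ‖l - ((lam j : ℝ) : ℂ)‖ ^ ν ≤
      ((j : ℝ) + 1) ^ μ / (|l.re| + c * ((j : ℝ) + 1) ^ (2 / (n : ℝ))) ^ ν := by
    gcongr
    linarith [hlam j, Complex.sub_re_le_norm_sub_ofReal l (lam j)]
  have hg := summable_rpow_div_add_rpow hν.le hμν hc (abs_nonneg l.re)
  have hf := hg.of_nonneg_of_le (fun j => by positivity) hterm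
  have hbound := (hf.tsum_le_tsum hterm hg).trans
    (tsum_rpow_div_add_rpow_le (by positivity) hν.le hμ1 hμν hc ht)
  rw [hexp] at hbound
  exact ⟨hf, hbound, hbound.trans
    (mul_le_of_le_one_right hC.le (Real.rpow_le_one_of_one_le_of_nonpos ht hexp_nonpos))⟩
end

section
/- Let n ≥ 1 be an integer, c̃ > 0, A > 0, μ ∈ ℝ and ν ≥ 0. Let (λ_j)_{j≥1} be a sequence of nonnegative real numbers satisfying |√(λ_j) − c̃ j^{1/n}| ≤ A for all j ≥ 1. Then there exist constants C > 0 and τ₀ ≥ 1, depending only on n, μ, ν, c̃, A, such that for every τ ≥ τ₀: Σ_{j : τ − 2A ≤ √(λ_j) ≤ τ + 2A} j^μ / ((τ² − λ_j)² + 4τ²)^{ν/2} ≤ C τ^{n − 1 + nμ − ν}. -/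
/-! On the window, the Weyl bound puts `c̃ j^{1/n}` within `3A` of `τ`, so `j` ranges over the
integers in `[α^n, β^n]` with `β - α = 6A/c̃` and `β ≤ 2τ/c̃`; by the mean value inequality there
are `O(τ^{n-1})` of them. Each such `j` is comparable to `τ^n`, so `j^μ ≲ τ^{nμ}`, while the
denominator is at least `(4τ²)^{ν/2} ≥ τ^ν`. -/

lemma rpow_le_max_mul_rpow {x t a b : ℝ} (p : ℝ) (ha : 0 < a) (ht : 0 < t)
    (hax : a * t ≤ x) (hxb : x ≤ b * t) : x ^ p ≤ max (a ^ p) (b ^ p) * t ^ p := by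
  have hb : 0 ≤ b := by nlinarith
  rcases le_total 0 p with hp | hp
  · calc x ^ p ≤ (b * t) ^ p := Real.rpow_le_rpow ((mul_pos ha ht).le.trans hax) hxb hp
      _ = b ^ p * t ^ p := Real.mul_rpow hb ht.le
      _ ≤ max (a ^ p) (b ^ p) * t ^ p := by gcongr; exact le_max_right _ _
  · calc x ^ p ≤ (a * t) ^ p := Real.rpow_le_rpow_of_nonpos (by positivity) hax hp
      _ = a ^ p * t ^ p := Real.mul_rpow ha.le ht.le
      _ ≤ max (a ^ p) (b ^ p) * t ^ p := by gcongr; exact le_max_left _ _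

lemma rpow_le_rpow_half_of_sq_le_s10 {t D : ℝ} (p : ℝ) (ht : 0 ≤ t) (hp : 0 ≤ p) (htD : t ^ 2 ≤ D) :
    t ^ p ≤ D ^ (p / 2) :=
  calc t ^ p = (t ^ 2) ^ (p / 2) := by rw [← Real.rpow_natCast, ← Real.rpow_mul ht]; ring_nf
    _ ≤ D ^ (p / 2) := Real.rpow_le_rpow (by positivity) htD (by positivity)

lemma summable_indicator_and_tsum_le_ncard_mul {ι : Type*} {S : Set ι} (hS : S.Finite)
    {g : ι → ℝ} {B : ℝ} (hg : ∀ j ∈ S, g j ≤ B) :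
    Summable (S.indicator g) ∧ ∑' j, S.indicator g j ≤ S.ncard * B := by
  have hsupp : ∀ j ∉ hS.toFinset, S.indicator g j = 0 := fun j hj =>
    Set.indicator_of_notMem (by simpa using hj) g
  refine ⟨summable_of_ne_finset_zero hsupp, ?_⟩
  rw [tsum_eq_sum hsupp, Set.ncard_eq_toFinset_card S hS, ← nsmul_eq_mul]
  refine Finset.sum_le_card_nsmul _ _ _ fun j hj => ?_
  rw [Set.Finite.mem_toFinset] at hj
  exact (Set.indicator_of_mem hj g).trans_le (hg j hj)

lemma finite_setOf_natCast_add_one_le (v : ℝ) : {j : ℕ | (j : ℝ) + 1 ≤ v}.Finite :=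
  (Set.finite_Iic ⌊v⌋₊).subset fun j (hj : (j : ℝ) + 1 ≤ v) =>
    Nat.le_floor (by linarith)

lemma ncard_setOf_natCast_add_one_mem_Icc_le {u v : ℝ} (hv : 0 ≤ v) (huv : u ≤ v + 1) :
    ({j : ℕ | u ≤ (j : ℝ) + 1 ∧ (j : ℝ) + 1 ≤ v}.ncard : ℝ) ≤ v - u + 1 := by
  have hsub : (· + 1) '' {j : ℕ | u ≤ (j : ℝ) + 1 ∧ (j : ℝ) + 1 ≤ v} ⊆
      Finset.Icc ⌈u⌉₊ ⌊v⌋₊ := by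
    rintro _ ⟨j, ⟨hju, hjv⟩, rfl⟩
    simp only [Finset.coe_Icc, Set.mem_Icc]
    exact ⟨Nat.ceil_le.2 (by push_cast; exact hju), Nat.le_floor (by push_cast; exact hjv)⟩
  have hcard := Set.ncard_le_ncard hsub (Finset.finite_toSet _)
  rw [Set.ncard_image_of_injective _ (add_left_injective 1), Set.ncard_coe_finset,
    Nat.card_Icc] at hcard
  have hfloor := Nat.floor_le hv
  have hceil := Nat.le_ceil u
  calc _ ≤ ((⌊v⌋₊ + 1 - ⌈u⌉₊ : ℕ) : ℝ) := by exact_mod_cast hcard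
    _ ≤ v - u + 1 := by
      rcases le_total ⌈u⌉₊ (⌊v⌋₊ + 1) with h | h
      · push_cast [Nat.cast_sub h]; linarith
      · rw [Nat.sub_eq_zero_of_le h, Nat.cast_zero]; linarith

lemma setOf_rpow_inv_mem_Icc_finite_and_ncard_le {n : ℕ} (hn : n ≠ 0) {a b : ℝ} (ha : 0 ≤ a)
    (hab : a ≤ b) :
    {j : ℕ | a ≤ ((j : ℝ) + 1) ^ (1 / (n : ℝ)) ∧ ((j : ℝ) + 1) ^ (1 / (n : ℝ)) ≤ b}.Finite ∧
    ({j : ℕ | a ≤ ((j : ℝ) + 1) ^ (1 / (n : ℝ)) ∧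
      ((j : ℝ) + 1) ^ (1 / (n : ℝ)) ≤ b}.ncard : ℝ) ≤ n * b ^ (n - 1) * (b - a) + 1 := by
  have hsub : {j : ℕ | a ≤ ((j : ℝ) + 1) ^ (1 / (n : ℝ)) ∧ ((j : ℝ) + 1) ^ (1 / (n : ℝ)) ≤ b} ⊆
      {j : ℕ | a ^ n ≤ (j : ℝ) + 1 ∧ (j : ℝ) + 1 ≤ b ^ n} := by
    rintro j ⟨hja, hjb⟩
    have hroot : (((j : ℝ) + 1) ^ (1 / (n : ℝ))) ^ n = (j : ℝ) + 1 := by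
      rw [one_div, Real.rpow_inv_natCast_pow (by positivity) hn]
    show a ^ n ≤ (j : ℝ) + 1 ∧ (j : ℝ) + 1 ≤ b ^ n
    rw [← hroot]
    exact ⟨pow_le_pow_left₀ ha hja n, pow_le_pow_left₀ (ha.trans hja) hjb n⟩
  have hfin : {j : ℕ | a ^ n ≤ (j : ℝ) + 1 ∧ (j : ℝ) + 1 ≤ b ^ n}.Finite :=
    (finite_setOf_natCast_add_one_le (b ^ n)).subset fun j hj => hj.2
  have hpow : a ^ n ≤ b ^ n := pow_le_pow_left₀ ha hab n
  refine ⟨hfin.subset hsub, ?_⟩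
  calc _ ≤ ({j : ℕ | a ^ n ≤ (j : ℝ) + 1 ∧ (j : ℝ) + 1 ≤ b ^ n}.ncard : ℝ) := by
        exact_mod_cast Set.ncard_le_ncard hsub hfin
    _ ≤ b ^ n - a ^ n + 1 :=
        ncard_setOf_natCast_add_one_mem_Icc_le (pow_nonneg (ha.trans hab) n) (by linarith)
    _ ≤ |b - a| * n * max |a| |b| ^ (n - 1) + 1 := by
        gcongr
        exact (le_abs_self _).trans (abs_pow_sub_pow_le b a n |>.trans_eq (by rw [max_comm]))
    _ = n * b ^ (n - 1) * (b - a) + 1 := by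
        rw [abs_of_nonneg ha, abs_of_nonneg (ha.trans hab), max_eq_right hab,
          abs_of_nonneg (sub_nonneg.2 hab)]
        ring

def weylWindow (lam : ℕ → ℝ) (A τ : ℝ) : Set ℕ :=
  {j | τ - 2 * A ≤ Real.sqrt (lam j) ∧ Real.sqrt (lam j) ≤ τ + 2 * A}

section WeylGap

variable {n : ℕ} {ctil A : ℝ} {lam : ℕ → ℝ}

lemma abs_mul_rpow_sub_le_of_mem_weylWindow {τ : ℝ} {j : ℕ}
    (hweyl : |Real.sqrt (lam j) - ctil * ((j : ℝ) + 1) ^ (1 / (n : ℝ))| ≤ A)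
    (hj : j ∈ weylWindow lam A τ) : |ctil * ((j : ℝ) + 1) ^ (1 / (n : ℝ)) - τ| ≤ 3 * A := by
  obtain ⟨hlo, hhi⟩ := hj
  rw [abs_le] at hweyl ⊢
  constructor <;> linarith [hweyl.1, hweyl.2]

lemma exists_weylWindow_finite_and_ncard_le (hn : n ≠ 0) (hctil : 0 < ctil)
    (hweyl : ∀ j : ℕ, |Real.sqrt (lam j) - ctil * ((j : ℝ) + 1) ^ (1 / (n : ℝ))| ≤ A) :
    ∃ C > 0, ∀ τ : ℝ, 1 ≤ τ → 6 * A ≤ τ →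
      (weylWindow lam A τ).Finite ∧ ((weylWindow lam A τ).ncard : ℝ) ≤ C * τ ^ (n - 1) := by
  have hA : 0 ≤ A := (abs_nonneg _).trans (hweyl 0)
  refine ⟨n * (2 / ctil) ^ (n - 1) * (6 * A / ctil) + 1, by positivity, fun τ hτ1 hτA => ?_⟩
  have hsub : weylWindow lam A τ ⊆ {j : ℕ | (τ - 3 * A) / ctil ≤ ((j : ℝ) + 1) ^ (1 / (n : ℝ)) ∧
      ((j : ℝ) + 1) ^ (1 / (n : ℝ)) ≤ (τ + 3 * A) / ctil} := fun j hj => by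
    have h := abs_le.mp (abs_mul_rpow_sub_le_of_mem_weylWindow (hweyl j) hj)
    exact ⟨(div_le_iff₀' hctil).2 (by linarith), (le_div_iff₀' hctil).2 (by linarith)⟩
  obtain ⟨hfin, hcard⟩ := setOf_rpow_inv_mem_Icc_finite_and_ncard_le hn
    (a := (τ - 3 * A) / ctil) (b := (τ + 3 * A) / ctil) (by bound) (by gcongr; linarith)
  refine ⟨hfin.subset hsub, ?_⟩
  calc _ ≤ _ := by exact_mod_cast Set.ncard_le_ncard hsub hfin
    _ ≤ _ := hcard
    _ ≤ n * (2 / ctil * τ) ^ (n - 1) * (6 * A / ctil) + τ ^ (n - 1) := by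
        gcongr
        · bound
        · rw [div_mul_eq_mul_div]; gcongr; linarith
        · exact (by ring : _ = 6 * A / ctil).le
        · exact one_le_pow₀ hτ1
    _ = _ := by rw [mul_pow]; ring

lemma exists_weylWindow_term_le (μ : ℝ) {ν : ℝ} (hn : n ≠ 0) (hctil : 0 < ctil) (hν : 0 ≤ ν)
    (hweyl : ∀ j : ℕ, |Real.sqrt (lam j) - ctil * ((j : ℝ) + 1) ^ (1 / (n : ℝ))| ≤ A) :
    ∃ K > 0, ∀ τ : ℝ, 0 < τ → 6 * A ≤ τ → ∀ j ∈ weylWindow lam A τ,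
      ((j : ℝ) + 1) ^ μ / ((τ ^ 2 - lam j) ^ 2 + 4 * τ ^ 2) ^ (ν / 2) ≤
        K * τ ^ ((n : ℝ) * μ - ν) := by
  refine ⟨max ((1 / (2 * ctil)) ^ ((n : ℝ) * μ)) ((2 / ctil) ^ ((n : ℝ) * μ)),
    lt_max_of_lt_left (by positivity), fun τ hτ hτA j hj => ?_⟩
  have h := abs_le.mp (abs_mul_rpow_sub_le_of_mem_weylWindow (hweyl j) hj)
  have hnum : ((j : ℝ) + 1) ^ μ = (((j : ℝ) + 1) ^ (1 / (n : ℝ))) ^ ((n : ℝ) * μ) := by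
    have hn' : (n : ℝ) ≠ 0 := by exact_mod_cast hn
    rw [← Real.rpow_mul (by positivity)]
    field_simp
  have hlo : 1 / (2 * ctil) * τ ≤ ((j : ℝ) + 1) ^ (1 / (n : ℝ)) := by
    rw [one_div_mul_eq_div, div_le_iff₀' (by positivity)]; linarith
  have hhi : ((j : ℝ) + 1) ^ (1 / (n : ℝ)) ≤ 2 / ctil * τ := by
    rw [div_mul_eq_mul_div, le_div_iff₀' hctil]; linarith
  calc _ ≤ (max ((1 / (2 * ctil)) ^ ((n : ℝ) * μ)) ((2 / ctil) ^ ((n : ℝ) * μ)) *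
          τ ^ ((n : ℝ) * μ)) / τ ^ ν := by
        rw [hnum]
        gcongr
        · exact rpow_le_max_mul_rpow _ (by positivity) hτ hlo hhi
        · exact rpow_le_rpow_half_of_sq_le_s10 ν hτ.le hν (by nlinarith [sq_nonneg (τ ^ 2 - lam j)])
    _ = _ := by rw [Real.rpow_sub hτ, mul_div_assoc]

end WeylGap

/-- Here `lam j` stands for `λ_{j+1}`, so that the sequence is indexed from `1`. -/
theorem series_estimate_middle_band_general (n : ℕ) (hn : 1 ≤ n) (ctil A μ ν : ℝ)
    (hctil : 0 < ctil) (hν : 0 ≤ ν)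
    (lam : ℕ → ℝ)
    (hweyl : ∀ j : ℕ, |Real.sqrt (lam j) - ctil * ((j : ℝ) + 1) ^ (1 / (n : ℝ))| ≤ A) :
    ∃ C τ₀ : ℝ, 0 < C ∧ 1 ≤ τ₀ ∧ ∀ τ : ℝ, τ₀ ≤ τ →
      Summable (Set.indicator
        {j : ℕ | τ - 2 * A ≤ Real.sqrt (lam j) ∧ Real.sqrt (lam j) ≤ τ + 2 * A}
        (fun j : ℕ => ((j : ℝ) + 1) ^ μ / ((τ ^ 2 - lam j) ^ 2 + 4 * τ ^ 2) ^ (ν / 2))) ∧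
      (∑' j : ℕ, Set.indicator
        {j : ℕ | τ - 2 * A ≤ Real.sqrt (lam j) ∧ Real.sqrt (lam j) ≤ τ + 2 * A}
        (fun j : ℕ => ((j : ℝ) + 1) ^ μ / ((τ ^ 2 - lam j) ^ 2 + 4 * τ ^ 2) ^ (ν / 2)) j) ≤
        C * τ ^ ((n : ℝ) - 1 + (n : ℝ) * μ - ν) := by
  have hn0 : n ≠ 0 := Nat.one_le_iff_ne_zero.mp hn
  obtain ⟨C, hC, hcount⟩ := exists_weylWindow_finite_and_ncard_le hn0 hctil hweyl
  obtain ⟨K, hK, hterm⟩ := exists_weylWindow_term_le μ hn0 hctil hν hweyl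
  refine ⟨C * K, max 1 (6 * A), by positivity, le_max_left _ _, fun τ hτ => ?_⟩
  have hτ1 : 1 ≤ τ := le_of_max_le_left hτ
  have hτ0 : 0 < τ := by linarith
  obtain ⟨hfin, hcard⟩ := hcount τ hτ1 (le_of_max_le_right hτ)
  obtain ⟨hsum, hle⟩ := summable_indicator_and_tsum_le_ncard_mul hfin
    (hterm τ hτ0 (le_of_max_le_right hτ))
  refine ⟨hsum, hle.trans ?_⟩
  calc _ ≤ C * τ ^ (n - 1) * (K * τ ^ ((n : ℝ) * μ - ν)) := by gcongr
    _ = C * K * (τ ^ ((n : ℝ) - 1) * τ ^ ((n : ℝ) * μ - ν)) := by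
        rw [← Real.rpow_natCast, Nat.cast_sub hn, Nat.cast_one]; ring
    _ = C * K * τ ^ ((n : ℝ) - 1 + (n : ℝ) * μ - ν) := by
        rw [← Real.rpow_add hτ0, add_sub_assoc]

/-- The middle-band estimate: if `(λ_j)_{j≥1}` is a nonnegative sequence satisfying the Weyl
gap bound `|√(λ_j) − c̃ j^{1/n}| ≤ A`, then the (finite) sum over the indices `j` with
`τ − 2A ≤ √(λ_j) ≤ τ + 2A` of `j^μ / ((τ² − λ_j)² + 4τ²)^{ν/2}` is at most
`C τ^{n − 1 + nμ − ν}` for all `τ ≥ τ₀`.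
Here `lam j` stands for `λ_{j+1}`, so that the sequence is indexed from `1`. -/
theorem series_estimate_middle_band (n : ℕ) (hn : 1 ≤ n) (ctil A μ ν : ℝ)
    (hctil : 0 < ctil) (hA : 0 < A) (hν : 0 ≤ ν)
    (lam : ℕ → ℝ) (hlam0 : ∀ j : ℕ, 0 ≤ lam j)
    (hweyl : ∀ j : ℕ, |Real.sqrt (lam j) - ctil * ((j : ℝ) + 1) ^ (1 / (n : ℝ))| ≤ A) :
    ∃ C τ₀ : ℝ, 0 < C ∧ 1 ≤ τ₀ ∧ ∀ τ : ℝ, τ₀ ≤ τ →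
      Summable (Set.indicator
        {j : ℕ | τ - 2 * A ≤ Real.sqrt (lam j) ∧ Real.sqrt (lam j) ≤ τ + 2 * A}
        (fun j : ℕ => ((j : ℝ) + 1) ^ μ / ((τ ^ 2 - lam j) ^ 2 + 4 * τ ^ 2) ^ (ν / 2))) ∧
      (∑' j : ℕ, Set.indicator
        {j : ℕ | τ - 2 * A ≤ Real.sqrt (lam j) ∧ Real.sqrt (lam j) ≤ τ + 2 * A}
        (fun j : ℕ => ((j : ℝ) + 1) ^ μ / ((τ ^ 2 - lam j) ^ 2 + 4 * τ ^ 2) ^ (ν / 2)) j) ≤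
        C * τ ^ ((n : ℝ) - 1 + (n : ℝ) * μ - ν) :=
  series_estimate_middle_band_general n hn ctil A μ ν hctil hν lam hweyl
end
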